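/- If P·A = G with A of full row rank, U·A = H the Hermite decomposition, and G upper triangular, then the matrix P·U^{-1} ∈ S^{n×n} is upper triangular and G_{ii} = (P·U^{-1})_{ii} · H_{ii} for all 1 ≤ i ≤ n; in particular deg_D G_{ii} ≥ deg_D H_{ii} whenever G_{ii} ≠ 0. -/

import Mathlib

/-- Abstract presentation of a skew (Ore/differential) polynomial ring `S = K[D; δ]`:
`S` is a ring containing `K` via `ι`, with a distinguished element `D` satisfying the
commutation rule `D * a = a * D + δ a`, and every element of `S` is (uniquely) a finite
sum `∑ aₙ Dⁿ`, with coefficients `coeff` supported on `supp`. -/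
structure DiffPolyRing (K : Type) [CommRing K] (S : Type) [Ring S] (δ : K → K) where
  ι : K →+* S
  D : S
  comm_rule : ∀ a : K, D * ι a = ι a * D + ι (δ a)
  coeff : S → ℕ → K
  supp : S → Finset ℕ
  mem_supp : ∀ f n, n ∈ supp f ↔ coeff f n ≠ 0
  coeff_add : ∀ f g n, coeff (f + g) n = coeff f n + coeff g n
  coeff_ext : ∀ f g : S, (∀ n, coeff f n = coeff g n) → f = g
  coeff_monomial : ∀ (a : K) (i n : ℕ), coeff (ι a * D ^ i) n = if n = i then a else 0
  repr_sum : ∀ f : S, f = ∑ n ∈ supp f, ι (coeff f n) * D ^ n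

namespace DiffPolyRing

variable {K S : Type} [CommRing K] [Ring S] {δ : K → K}

/-- Degree in the variable `D`, with `degD 0 = ⊥` (i.e. `-∞`). -/
noncomputable def degD (R : DiffPolyRing K S δ) (f : S) : WithBot ℕ := (R.supp f).max

/-- Degree in `D` as a natural number (`0` for the zero polynomial). -/
noncomputable def natDegD (R : DiffPolyRing K S δ) (f : S) : ℕ := (R.degD f).unbotD 0

/-- `f` is monic: its leading coefficient (in `D`) is `1`. -/
noncomputable def Monic (R : DiffPolyRing K S δ) (f : S) : Prop :=
  R.coeff f (R.natDegD f) = 1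

/-- `H` is in Hermite form: upper triangular, monic diagonal entries, and each
off-diagonal entry has `D`-degree strictly less than the diagonal entry below it. -/
noncomputable def HermiteForm (R : DiffPolyRing K S δ) {n : ℕ}
    (H : Matrix (Fin n) (Fin n) S) : Prop :=
  (∀ i j, j < i → H i j = 0) ∧ (∀ i, R.Monic (H i i)) ∧
    (∀ i j, i < j → R.degD (H i j) < R.degD (H j j))

/-- The rows of `A` are left `S`-linearly independent. -/
def FullRowRank {n : ℕ} (A : Matrix (Fin n) (Fin n) S) : Prop :=
  ∀ c : Fin n → S, (∀ j, (∑ i, c i * A i j) = 0) → c = 0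

end DiffPolyRing

namespace DiffPolyRing

section Aux

variable {K S : Type} [Field K] [Ring S] {δ : K → K} (R : DiffPolyRing K S δ)

lemma coeff_zero' (n : ℕ) : R.coeff 0 n = 0 := by
  have h := R.coeff_add 0 0 n
  rw [add_zero] at h
  exact (right_eq_add.mp h)

lemma eq_zero_of_supp_empty {f : S} (h : R.supp f = ∅) : f = 0 := by
  apply R.coeff_ext f 0
  intro n
  rw [R.coeff_zero']
  by_contra hc
  have : n ∈ R.supp f := (R.mem_supp f n).mpr hc
  rw [h] at this
  exact absurd this (Finset.notMem_empty n)

lemma coeff_sum' {ι' : Type*} (s : Finset ι') (f : ι' → S) (n : ℕ) :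
    R.coeff (∑ x ∈ s, f x) n = ∑ x ∈ s, R.coeff (f x) n := by
  classical
  induction s using Finset.induction with
  | empty => simp [R.coeff_zero']
  | insert _ _ h ih => rw [Finset.sum_insert h, Finset.sum_insert h, R.coeff_add, ih]

lemma le_natDegD_of_mem {f : S} {m : ℕ} (h : m ∈ R.supp f) : m ≤ R.natDegD f := by
  have h1 : (m : WithBot ℕ) ≤ (R.supp f).max := Finset.le_max h
  cases hmax : (R.supp f).max with
  | bot => rw [hmax] at h1; exact absurd h1 (by simp)
  | coe k =>
      rw [hmax] at h1
      unfold natDegD degD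
      rw [hmax, WithBot.unbotD_coe]
      exact WithBot.coe_le_coe.mp h1

lemma coeff_eq_zero_of_gt {f : S} {m : ℕ} (h : R.natDegD f < m) : R.coeff f m = 0 := by
  by_contra hc
  have := R.le_natDegD_of_mem ((R.mem_supp f m).mpr hc)
  omega

lemma degD_eq_natDegD {f : S} (hf : f ≠ 0) : R.degD f = (R.natDegD f : WithBot ℕ) := by
  cases hmax : (R.supp f).max with
  | bot =>
      exact absurd (R.eq_zero_of_supp_empty (Finset.max_eq_bot.mp hmax)) hf
  | coe k =>
      unfold natDegD degD
      rw [hmax]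
      rfl

lemma lead_ne_zero {f : S} (hf : f ≠ 0) : R.coeff f (R.natDegD f) ≠ 0 := by
  have h : (R.supp f).max = (R.natDegD f : WithBot ℕ) := R.degD_eq_natDegD hf
  exact (R.mem_supp f _).mp (Finset.mem_of_max h)

lemma ne_zero_of_coeff {f : S} {m : ℕ} (h : R.coeff f m ≠ 0) : f ≠ 0 := by
  intro h0
  subst h0
  exact h (R.coeff_zero' m)

lemma coeff_C_mul (a : K) (f : S) (n : ℕ) :
    R.coeff (R.ι a * f) n = a * R.coeff f n := by
  have hrepr : R.ι a * f = ∑ m ∈ R.supp f, R.ι a * (R.ι (R.coeff f m) * R.D ^ m) := by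
    conv_lhs => rw [R.repr_sum f]
    rw [Finset.mul_sum]
  rw [hrepr, R.coeff_sum']
  calc (∑ m ∈ R.supp f, R.coeff (R.ι a * (R.ι (R.coeff f m) * R.D ^ m)) n)
      = ∑ m ∈ R.supp f, (if n = m then a * R.coeff f m else 0) := by
        refine Finset.sum_congr rfl fun m _ => ?_
        rw [← mul_assoc, ← map_mul, R.coeff_monomial]
    _ = if n ∈ R.supp f then a * R.coeff f n else 0 := Finset.sum_ite_eq _ _ _
    _ = a * R.coeff f n := by
        by_cases h : n ∈ R.supp f
        · simp [h]
        · have h0 : R.coeff f n = 0 := by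
            by_contra hc; exact h ((R.mem_supp f n).mpr hc)
          simp [h, h0]

lemma coeff_D_mul_succ (hδ0 : δ 0 = 0) (f : S) (t : ℕ) :
    R.coeff (R.D * f) (t + 1) = R.coeff f t + δ (R.coeff f (t + 1)) := by
  have hexp : R.D * f = ∑ m ∈ R.supp f,
      (R.ι (R.coeff f m) * R.D ^ (m + 1) + R.ι (δ (R.coeff f m)) * R.D ^ m) := by
    conv_lhs => rw [R.repr_sum f]
    rw [Finset.mul_sum]
    refine Finset.sum_congr rfl fun m _ => ?_
    rw [← mul_assoc, R.comm_rule, add_mul, mul_assoc, ← pow_succ']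
  rw [hexp, R.coeff_sum']
  have hterm : ∀ m ∈ R.supp f,
      R.coeff (R.ι (R.coeff f m) * R.D ^ (m + 1) + R.ι (δ (R.coeff f m)) * R.D ^ m) (t + 1)
        = (if t = m then R.coeff f m else 0) + (if t + 1 = m then δ (R.coeff f m) else 0) := by
    intro m _
    rw [R.coeff_add, R.coeff_monomial, R.coeff_monomial]
    congr 1
    by_cases h : t = m
    · subst h; simp
    · rw [if_neg h, if_neg (by omega)]
  rw [Finset.sum_congr rfl hterm, Finset.sum_add_distrib, Finset.sum_ite_eq, Finset.sum_ite_eq]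
  have hfirst : (if t ∈ R.supp f then R.coeff f t else 0) = R.coeff f t := by
    by_cases h : t ∈ R.supp f
    · simp [h]
    · have h0 : R.coeff f t = 0 := by by_contra hc; exact h ((R.mem_supp f t).mpr hc)
      simp [h, h0]
  have hsecond : (if t + 1 ∈ R.supp f then δ (R.coeff f (t + 1)) else 0)
      = δ (R.coeff f (t + 1)) := by
    by_cases h : t + 1 ∈ R.supp f
    · simp [h]
    · have h0 : R.coeff f (t + 1) = 0 := by by_contra hc; exact h ((R.mem_supp f _).mpr hc)
      simp [h, h0, hδ0]
  rw [hfirst, hsecond]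

lemma coeff_D_pow_mul (hδ0 : δ 0 = 0) (g : S) (d : ℕ)
    (hd : ∀ m, d < m → R.coeff g m = 0) (i : ℕ) :
    (∀ m, i + d < m → R.coeff (R.D ^ i * g) m = 0) ∧
      R.coeff (R.D ^ i * g) (i + d) = R.coeff g d := by
  induction i with
  | zero =>
      refine ⟨fun m hm => ?_, ?_⟩
      · rw [pow_zero, one_mul]; exact hd m (by omega)
      · rw [pow_zero, one_mul, Nat.zero_add]
  | succ i ih =>
      have hrw : R.D ^ (i + 1) * g = R.D * (R.D ^ i * g) := by
        rw [pow_succ', mul_assoc]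
      constructor
      · intro m hm
        obtain ⟨t, rfl⟩ : ∃ t, m = t + 1 := ⟨m - 1, by omega⟩
        rw [hrw, R.coeff_D_mul_succ hδ0, ih.1 t (by omega), ih.1 (t + 1) (by omega),
          hδ0, add_zero]
      · have heq : i + 1 + d = (i + d) + 1 := by omega
        rw [hrw, heq, R.coeff_D_mul_succ hδ0, ih.2, ih.1 (i + d + 1) (by omega), hδ0, add_zero]

lemma degD_mul' (hδ0 : δ 0 = 0) {f g : S} (hf : f ≠ 0) (hg : g ≠ 0) :
    f * g ≠ 0 ∧ R.degD (f * g) = ((R.natDegD f + R.natDegD g : ℕ) : WithBot ℕ) := by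
  set df := R.natDegD f with hdf
  set dg := R.natDegD g with hdg
  have hmul : ∀ N, R.coeff (f * g) N = ∑ m ∈ R.supp f, R.coeff f m * R.coeff (R.D ^ m * g) N := by
    intro N
    have hr : f * g = ∑ m ∈ R.supp f, R.ι (R.coeff f m) * (R.D ^ m * g) := by
      conv_lhs => rw [R.repr_sum f]
      rw [Finset.sum_mul]
      exact Finset.sum_congr rfl fun m _ => mul_assoc _ _ _
    rw [hr, R.coeff_sum']
    exact Finset.sum_congr rfl fun m _ => R.coeff_C_mul _ _ _
  have hpow := fun m => R.coeff_D_pow_mul hδ0 g dg (fun m hm => R.coeff_eq_zero_of_gt hm) m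
  have hhigh : ∀ N, df + dg < N → R.coeff (f * g) N = 0 := by
    intro N hN
    rw [hmul]
    apply Finset.sum_eq_zero
    intro m hm
    have hmle := R.le_natDegD_of_mem hm
    rw [(hpow m).1 N (by omega), mul_zero]
  have htop : R.coeff (f * g) (df + dg) = R.coeff f df * R.coeff g dg := by
    rw [hmul, Finset.sum_eq_single df]
    · rw [(hpow df).2]
    · intro m hm hne
      have hle := R.le_natDegD_of_mem hm
      rw [(hpow m).1 _ (by omega), mul_zero]
    · intro hdfm
      have h0 : R.coeff f df = 0 := by
        by_contra hc; exact hdfm ((R.mem_supp f df).mpr hc)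
      rw [h0, zero_mul]
  have hnz : R.coeff (f * g) (df + dg) ≠ 0 := by
    rw [htop]
    exact mul_ne_zero (R.lead_ne_zero hf) (R.lead_ne_zero hg)
  have hne : f * g ≠ 0 := R.ne_zero_of_coeff hnz
  refine ⟨hne, ?_⟩
  rw [R.degD_eq_natDegD hne]
  have hub : R.natDegD (f * g) ≤ df + dg := by
    by_contra h
    exact R.lead_ne_zero hne (hhigh _ (by omega))
  have hlb : df + dg ≤ R.natDegD (f * g) :=
    R.le_natDegD_of_mem ((R.mem_supp _ _).mpr hnz)
  rw [le_antisymm hub hlb]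

include R in
lemma eq_zero_of_mul_eq_zero (hδ0 : δ 0 = 0) {f g : S} (h : f * g = 0) (hg : g ≠ 0) :
    f = 0 := by
  by_contra hf
  exact (R.degD_mul' hδ0 hf hg).1 h

end Aux

end DiffPolyRing

/-- if `P·A = G` with `G` upper triangular and `U·A = H` the Hermite
decomposition of the full-row-rank matrix `A` (with `U⁻¹ = Ui`), then `P·U⁻¹` is upper
triangular, `G_{ii} = (P·U⁻¹)_{ii} · H_{ii}`, and `deg_D G_{ii} ≥ deg_D H_{ii}`
whenever `G_{ii} ≠ 0`. -/
theorem diag_factorization_through_hermite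
    {F : Type} [Field F] [CharZero F] {S : Type} [Ring S]
    (δ : RatFunc F → RatFunc F)
    (hδadd : ∀ a b : RatFunc F, δ (a + b) = δ a + δ b)
    (hδmul : ∀ a b : RatFunc F, δ (a * b) = a * δ b + δ a * b)
    (R : DiffPolyRing (RatFunc F) S δ) {n : ℕ}
    (A U Ui H P G : Matrix (Fin n) (Fin n) S)
    (hA : DiffPolyRing.FullRowRank A)
    (hUUi : U * Ui = 1) (hUiU : Ui * U = 1)
    (hUA : U * A = H) (hH : R.HermiteForm H)
    (hPA : P * A = G)
    (hGtri : ∀ i j, j < i → G i j = 0) :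
    (∀ i j, j < i → (P * Ui) i j = 0) ∧
    (∀ i, G i i = (P * Ui) i i * H i i) ∧
    (∀ i, G i i ≠ 0 → R.degD (H i i) ≤ R.degD (G i i)) := by
  have hδ0 : δ 0 = 0 := by
    have h := hδadd 0 0
    rw [add_zero] at h
    exact (right_eq_add.mp h)
  set Q : Matrix (Fin n) (Fin n) S := P * Ui with hQ
  -- H has nonzero diagonal
  have hHdne : ∀ i, H i i ≠ 0 := by
    intro i h0
    have hm := hH.2.1 i
    rw [h0] at hm
    unfold DiffPolyRing.Monic at hm
    rw [R.coeff_zero'] at hm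
    exact zero_ne_one hm
  -- Q * H = G
  have hQH : Q * H = G := by
    rw [hQ, ← hUA, Matrix.mul_assoc, ← Matrix.mul_assoc Ui U A, hUiU, Matrix.one_mul, hPA]
  -- Q is upper triangular, by strong induction on the column index
  have key : ∀ (m : ℕ), ∀ j : Fin n, (j : ℕ) = m → ∀ i, j < i → Q i j = 0 := by
    intro m
    induction m using Nat.strong_induction_on with
    | _ m ih =>
      intro j hj i hij
      have hsum : ∑ k, Q i k * H k j = 0 := by
        rw [← Matrix.mul_apply, hQH]
        exact hGtri i j hij
      have hsingle : ∑ k, Q i k * H k j = Q i j * H j j := by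
        refine Finset.sum_eq_single j (fun k _ hk => ?_) (fun hjm => absurd (Finset.mem_univ j) hjm)
        rcases lt_or_gt_of_ne hk with hlt | hgt
        · have hQik : Q i k = 0 := ih (k : ℕ) (by subst hj; exact hlt) k rfl i (lt_trans hlt hij)
          rw [hQik, zero_mul]
        · rw [hH.1 k j hgt, mul_zero]
      rw [hsingle] at hsum
      exact R.eq_zero_of_mul_eq_zero hδ0 hsum (hHdne j)
  have hQtri : ∀ i j, j < i → Q i j = 0 := fun i j hij => key (j : ℕ) j rfl i hij
  -- diagonal factorization
  have hdiag : ∀ i, G i i = Q i i * H i i := by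
    intro i
    rw [← hQH, Matrix.mul_apply]
    refine Finset.sum_eq_single i (fun k _ hk => ?_) (fun him => absurd (Finset.mem_univ i) him)
    rcases lt_or_gt_of_ne hk with hlt | hgt
    · rw [hQtri i k hlt, zero_mul]
    · rw [hH.1 k i hgt, mul_zero]
  refine ⟨hQtri, hdiag, ?_⟩
  intro i hGi
  have hQii : Q i i ≠ 0 := by
    intro h0
    rw [hdiag i, h0, zero_mul] at hGi
    exact hGi rfl
  have hmul := R.degD_mul' hδ0 hQii (hHdne i)
  rw [hdiag i, hmul.2, R.degD_eq_natDegD (hHdne i)]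
  exact_mod_cast Nat.le_add_left _ _
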